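/- arXiv:1402.3734 — 4 statements merged into one kernel-verified Lean document; each statement's English description precedes it below -/
import Mathlib

section
/- The ternary operation t(u,v,w) = u - m(u,v,w) + w on ℝ, where m is the median operation, restricts to a continuous operation on [0,1] and satisfies the two-thirds minority equations: t(x,x,y) = y, t(y,x,x) = y, and t(x,y,x) = x. -/
/-- The median operation on ℝ. -/
noncomputable def med4 (u v w : ℝ) : ℝ := max (max (min u v) (min u w)) (min v w)

/-- The two-thirds minority operation t(u,v,w) = u - median + w on ℝ. -/
noncomputable def tmin (u v w : ℝ) : ℝ := u - med4 u v w + w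

theorem stmt_4 :
    (∀ u v w : ℝ, u ∈ Set.Icc (0:ℝ) 1 → v ∈ Set.Icc (0:ℝ) 1 → w ∈ Set.Icc (0:ℝ) 1 →
      tmin u v w ∈ Set.Icc (0:ℝ) 1) ∧
    Continuous (fun p : ℝ × ℝ × ℝ => tmin p.1 p.2.1 p.2.2) ∧
    (∀ x y : ℝ, tmin x x y = y ∧ tmin y x x = y ∧ tmin x y x = x) := by
  refine ⟨?_, ?_, ?_⟩
  · intro u v w hu hv hw
    obtain ⟨hu0, hu1⟩ := hu
    obtain ⟨hv0, hv1⟩ := hv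
    obtain ⟨hw0, hw1⟩ := hw
    simp only [Set.mem_Icc, tmin, med4]
    rcases le_total u v with h1 | h1 <;> rcases le_total u w with h2 | h2 <;>
      rcases le_total v w with h3 | h3 <;>
      simp only [min_def, max_def] <;> split_ifs <;> constructor <;> linarith
  · unfold tmin med4
    fun_prop
  · intro x y
    refine ⟨?_, ?_, ?_⟩ <;> simp [tmin, med4]
end

section
/- If A is a topological space equipped with continuous operations H : A² → A and d : A → A satisfying H(x,x) = x, H(x,H(y,z)) = H(x,z) = H(H(x,y),z), d(d(x)) = x, and d(H(x,y)) = H(d(y),d(x)), then A is homeomorphic to B × B, where B is the subspace {a ∈ A : d(a) = a}. -/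
theorem stmt_7 {A : Type*} [TopologicalSpace A]
    (H : A → A → A) (d : A → A)
    (hH : Continuous (fun p : A × A => H p.1 p.2)) (hd : Continuous d)
    (h1 : ∀ x : A, H x x = x)
    (h2 : ∀ x y z : A, H x (H y z) = H x z ∧ H (H x y) z = H x z)
    (h3 : ∀ x : A, d (d x) = x)
    (h4 : ∀ x y : A, d (H x y) = H (d y) (d x)) :
    Nonempty (A ≃ₜ ({a : A // d a = a} × {a : A // d a = a})) := by
  refine ⟨{
    toFun := fun a => (⟨H a (d a), by rw [h4, h3]⟩, ⟨H (d a) a, by rw [h4, h3]⟩),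
    invFun := fun p => H p.1.1 p.2.1,
    left_inv := fun a => by
      simp only
      rw [(h2 _ _ _).2, (h2 _ _ _).1, h1],
    right_inv := fun p => by
      obtain ⟨⟨b, hb⟩, ⟨c, hc⟩⟩ := p
      simp only [Prod.mk.injEq, Subtype.mk.injEq]
      constructor
      · rw [h4, hb, hc, (h2 _ _ _).2, (h2 _ _ _).1, h1]
      · rw [h4, hb, hc, (h2 _ _ _).2, (h2 _ _ _).1, h1],
    continuous_toFun := by
      exact (Continuous.subtype_mk (hH.comp (continuous_id.prodMk hd)) _).prodMk
        (Continuous.subtype_mk (hH.comp (hd.prodMk continuous_id)) _),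
    continuous_invFun := by
      exact hH.comp ((continuous_subtype_val.comp continuous_fst).prodMk
        (continuous_subtype_val.comp continuous_snd)) }⟩
end

section
/- If operations H and d on a set A satisfy H(x,x) = x, H(x,H(y,z)) = H(x,z) = H(H(x,y),z), d(d(x)) = x, and d(H(x,y)) = H(d(y),d(x)), then the derived operation x ⋆ y = d(H(y,x)) satisfies (x ⋆ y) ⋆ (y ⋆ z) = y. -/
theorem stmt_9 {A : Type*} (H : A → A → A) (d : A → A)
    (h1 : ∀ x : A, H x x = x)
    (h2 : ∀ x y z : A, H x (H y z) = H x z ∧ H (H x y) z = H x z)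
    (h3 : ∀ x : A, d (d x) = x)
    (h4 : ∀ x y : A, d (H x y) = H (d y) (d x)) :
    let star : A → A → A := fun x y => d (H y x)
    ∀ x y z : A, star (star x y) (star y z) = y := by
  intro star x y z
  show d (H (d (H z y)) (d (H y x))) = y
  rw [← h4, h3, (h2 _ _ _).1, (h2 _ _ _).2, h1]
end

section
/- There is no topological space A with more than one element that has the fixed-point property (every continuous self-map has a fixed point) and admits continuous operations F : A³ → A and φ : A → A satisfying F(x,x,y) = y and F(φ(x),x,y) = x for all x, y ∈ A. -/
theorem stmt_10 {A : Type*} [TopologicalSpace A]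
    (hbig : ∃ a b : A, a ≠ b)
    (hfpp : ∀ f : A → A, Continuous f → ∃ a : A, f a = a)
    (F : A → A → A → A) (φ : A → A)
    (hF : Continuous (fun x : A × A × A => F x.1 x.2.1 x.2.2))
    (hφ : Continuous φ)
    (e1 : ∀ x y : A, F x x y = y)
    (e2 : ∀ x y : A, F (φ x) x y = x) : False := by
  obtain ⟨a, b, hab⟩ := hbig
  obtain ⟨p, hp⟩ := hfpp φ hφ
  have ha : a = p := by have := e2 p a; rwa [hp, e1] at this
  have hb : b = p := by have := e2 p b; rwa [hp, e1] at this
  exact hab (ha.trans hb.symm)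
end
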